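/- arXiv:2510.08345 — 4 statements merged into one kernel-verified Lean document; each statement's English description precedes it below -/
import Mathlib

section
/- For s ∈ (0,1), ∫_0^∞ (1 - cos τ) τ^{-1-2s} dτ = cos(πs) Γ(2-2s) / (2s(1-2s)), where for s = 1/2 the right-hand side is interpreted by its continuous extension π/2. -/
/-!
Since `Γ(2s+1) τ^(-1-2s) = ∫₀^∞ t^(2s) e^(-tτ) dt`, swapping the two integrals (all integrands
are nonnegative) and using the Laplace transform `∫₀^∞ (1 - cos τ) e^(-tτ) dτ = 1/(t(1+t²))`
gives `Γ(2s+1) ∫₀^∞ (1 - cos τ) τ^(-1-2s) dτ = ∫₀^∞ t^(2s-1)/(1+t²) dt`. The same trick with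
`1/(1+t²) = ∫₀^∞ e^(-(1+t²)u) du` evaluates the last integral as
`Γ(s)Γ(1-s)/2 = π/(2 sin πs)`. The reflection formula at `2s` then rewrites
`π/(2 sin(πs) Γ(2s+1))` in the stated form.
-/

open MeasureTheory Real Set Function

theorem integrable_prod_of_nonneg {α β : Type*} [MeasurableSpace α] [MeasurableSpace β]
    {μ : Measure α} {ν : Measure β} [SFinite ν] {f : α → β → ℝ}
    (hf : AEStronglyMeasurable (uncurry f) (μ.prod ν))
    (hf_nonneg : ∀ᵐ x ∂μ, 0 ≤ᵐ[ν] f x) (hf_int : ∀ᵐ x ∂μ, Integrable (f x) ν)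
    (hf_int' : Integrable (fun x ↦ ∫ y, f x y ∂ν) μ) :
    Integrable (uncurry f) (μ.prod ν) := by
  refine (integrable_prod_iff hf).2 ⟨hf_int, hf_int'.congr ?_⟩
  filter_upwards [hf_nonneg] with x hx
  exact integral_congr_ae (hx.mono fun y hy ↦ (norm_of_nonneg hy).symm)

lemma integral_exp_neg_mul_Ioi {c : ℝ} (hc : 0 < c) : ∫ u in Ioi 0, exp (-c * u) = c⁻¹ := by
  rw [integral_exp_mul_Ioi (neg_lt_zero.2 hc), mul_zero, exp_zero, neg_div_neg_eq, one_div]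

lemma integral_cos_mul_exp_neg_mul_Ioi {t : ℝ} (ht : 0 < t) :
    ∫ τ in Ioi 0, cos τ * exp (-(t * τ)) = t / (1 + t ^ 2) := by
  have ha : (-t + Complex.I).re < 0 := by simpa using ht
  have hre (τ : ℝ) : cos τ * exp (-(t * τ)) = (Complex.exp ((-t + Complex.I) * τ)).re := by
    rw [Complex.exp_re]; simp [mul_comm]
  simp_rw [hre, ← RCLike.re_to_complex]
  rw [integral_re (integrableOn_exp_mul_complex_Ioi ha 0), integral_exp_mul_complex_Ioi ha 0]
  simp [Complex.div_re, Complex.normSq_apply, add_comm, sq]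

lemma integrableOn_cos_mul_exp_neg_mul_Ioi {t : ℝ} (ht : 0 < t) :
    IntegrableOn (fun τ ↦ cos τ * exp (-(t * τ))) (Ioi 0) := by
  refine (exp_neg_integrableOn_Ioi 0 ht).mono' (by fun_prop) (ae_of_all _ fun τ ↦ ?_)
  rw [norm_mul, norm_of_nonneg (exp_pos _).le, neg_mul]
  exact mul_le_of_le_one_left (exp_pos _).le (abs_cos_le_one τ)

lemma integral_one_sub_cos_mul_exp_neg_mul_Ioi {t : ℝ} (ht : 0 < t) :
    ∫ τ in Ioi 0, (1 - cos τ) * exp (-(t * τ)) = (t * (1 + t ^ 2))⁻¹ := by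
  have hexp : IntegrableOn (fun τ ↦ exp (-(t * τ))) (Ioi 0) := by
    simpa only [neg_mul] using exp_neg_integrableOn_Ioi 0 ht
  simp_rw [sub_mul, one_mul]
  rw [integral_sub hexp (integrableOn_cos_mul_exp_neg_mul_Ioi ht),
    integral_cos_mul_exp_neg_mul_Ioi ht]
  simp_rw [← neg_mul]
  rw [integral_exp_neg_mul_Ioi ht]
  field_simp
  ring

section

local notation "μ₊" => volume.restrict (Ioi (0 : ℝ))

variable {s : ℝ}

lemma integral_rpow_mul_exp_neg_one_add_sq_mul_eq_Gamma (hs : 0 < s) {u : ℝ} (hu : 0 < u) :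
    ∫ t in Ioi 0, t ^ (2 * s - 1) * exp (-(1 + t ^ 2) * u)
      = Gamma s / 2 * (exp (-u) * u ^ (-s)) := by
  have hsplit : ∀ t ∈ Ioi (0 : ℝ), t ^ (2 * s - 1) * exp (-(1 + t ^ 2) * u)
      = exp (-u) * (t ^ (2 * s - 1) * exp (-u * t ^ (2 : ℝ))) := fun t _ ↦ by
    rw [rpow_two, ← mul_left_comm, ← exp_add]
    ring_nf
  rw [setIntegral_congr_fun measurableSet_Ioi hsplit, integral_const_mul,
    integral_rpow_mul_exp_neg_mul_rpow two_pos (by linarith) hu,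
    show (2 * s - 1 + 1) / 2 = s by ring, show -(2 * s - 1 + 1) / 2 = -s by ring]
  ring

lemma integrable_rpow_mul_exp_neg_one_add_sq_mul (hs0 : 0 < s) (hs1 : s < 1) :
    Integrable (uncurry fun u t : ℝ ↦ t ^ (2 * s - 1) * exp (-(1 + t ^ 2) * u))
      (μ₊.prod μ₊) := by
  have hinner : ∀ᵐ u ∂μ₊, ∫ t in Ioi 0, t ^ (2 * s - 1) * exp (-(1 + t ^ 2) * u)
      = Gamma s / 2 * (exp (-u) * u ^ (1 - s - 1)) := by
    filter_upwards [ae_restrict_mem measurableSet_Ioi] with u hu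
    rw [integral_rpow_mul_exp_neg_one_add_sq_mul_eq_Gamma hs0 hu, sub_sub_cancel_left]
  refine integrable_prod_of_nonneg (by fun_prop) ?_ ?_ ?_
  · refine ae_of_all _ fun u ↦ ?_
    filter_upwards [ae_restrict_mem measurableSet_Ioi] with t (ht : 0 < t)
    positivity
  · filter_upwards [hinner, ae_restrict_mem measurableSet_Ioi] with u hu (hu0 : 0 < u)
    refine Integrable.of_integral_ne_zero (hu ▸ ?_)
    have := Gamma_pos_of_pos hs0
    positivity
  · exact ((GammaIntegral_convergent (by linarith)).const_mul _).congr
      (hinner.mono fun _ h ↦ h.symm)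

lemma integral_mul_exp_neg_one_add_sq_mul_eq_inv (t : ℝ) :
    ∫ u in Ioi 0, t ^ (2 * s - 1) * exp (-(1 + t ^ 2) * u)
      = t ^ (2 * s - 1) * (1 + t ^ 2)⁻¹ := by
  rw [integral_const_mul, integral_exp_neg_mul_Ioi (by positivity)]

lemma integrableOn_rpow_mul_inv_one_add_sq (hs0 : 0 < s) (hs1 : s < 1) :
    IntegrableOn (fun t : ℝ ↦ t ^ (2 * s - 1) * (1 + t ^ 2)⁻¹) (Ioi 0) := by
  rw [IntegrableOn]
  simpa only [uncurry_apply_pair, integral_mul_exp_neg_one_add_sq_mul_eq_inv] using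
    (integrable_rpow_mul_exp_neg_one_add_sq_mul hs0 hs1).integral_prod_right

lemma integral_rpow_mul_inv_one_add_sq (hs0 : 0 < s) (hs1 : s < 1) :
    ∫ t in Ioi 0, t ^ (2 * s - 1) * (1 + t ^ 2)⁻¹ = π / (2 * sin (π * s)) := by
  have hswap := integral_integral_swap (integrable_rpow_mul_exp_neg_one_add_sq_mul hs0 hs1)
  simp only [integral_mul_exp_neg_one_add_sq_mul_eq_inv] at hswap
  rw [← hswap, setIntegral_congr_fun measurableSet_Ioi
      fun u hu ↦ integral_rpow_mul_exp_neg_one_add_sq_mul_eq_Gamma hs0 hu, integral_const_mul,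
    ← sub_sub_cancel_left 1 s, ← Gamma_eq_integral (by linarith),
    div_mul_eq_mul_div, Gamma_mul_Gamma_one_sub, div_div, mul_comm]

lemma integral_rpow_mul_one_sub_cos_mul_exp_neg_mul {t : ℝ} (ht : 0 < t) :
    ∫ τ in Ioi 0, t ^ (2 * s) * ((1 - cos τ) * exp (-(t * τ)))
      = t ^ (2 * s - 1) * (1 + t ^ 2)⁻¹ := by
  rw [integral_const_mul, integral_one_sub_cos_mul_exp_neg_mul_Ioi ht, rpow_sub ht, rpow_one]
  field_simp

lemma integrable_rpow_mul_one_sub_cos_mul_exp_neg_mul (hs0 : 0 < s) (hs1 : s < 1) :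
    Integrable (uncurry fun t τ : ℝ ↦ t ^ (2 * s) * ((1 - cos τ) * exp (-(t * τ))))
      (μ₊.prod μ₊) := by
  refine integrable_prod_of_nonneg (by fun_prop) ?_ ?_ ?_
  · filter_upwards [ae_restrict_mem measurableSet_Ioi] with t (ht : 0 < t)
    refine ae_of_all _ fun τ ↦ ?_
    have := sub_nonneg.2 (cos_le_one τ)
    positivity
  · filter_upwards [ae_restrict_mem measurableSet_Ioi] with t (ht : 0 < t)
    refine Integrable.of_integral_ne_zero
      ((integral_rpow_mul_one_sub_cos_mul_exp_neg_mul ht).symm ▸ ?_)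
    positivity
  · exact (integrableOn_rpow_mul_inv_one_add_sq hs0 hs1).congr_fun
      (fun t ht ↦ (integral_rpow_mul_one_sub_cos_mul_exp_neg_mul ht).symm) measurableSet_Ioi

lemma integral_one_sub_cos_mul_rpow (hs0 : 0 < s) (hs1 : s < 1) :
    ∫ τ in Ioi 0, (1 - cos τ) * τ ^ (-1 - 2 * s)
      = π / (2 * sin (π * s) * Gamma (2 * s + 1)) := by
  have houter : ∀ τ ∈ Ioi (0 : ℝ),
      ∫ t in Ioi 0, t ^ (2 * s) * ((1 - cos τ) * exp (-(t * τ)))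
        = Gamma (2 * s + 1) * ((1 - cos τ) * τ ^ (-1 - 2 * s)) := fun τ (hτ : 0 < τ) ↦ by
    have hexp : ∀ t, t ^ (2 * s) * ((1 - cos τ) * exp (-(t * τ)))
        = (1 - cos τ) * (t ^ (2 * s + 1 - 1) * exp (-(τ * t))) := fun t ↦ by
      rw [add_sub_cancel_right, mul_comm τ]
      ring
    simp_rw [hexp]
    rw [integral_const_mul, integral_rpow_mul_exp_neg_mul_Ioi (by linarith) hτ, one_div,
      inv_rpow hτ.le, ← rpow_neg hτ.le, show -(2 * s + 1) = -1 - 2 * s by ring]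
    ring
  have hswap := integral_integral_swap (integrable_rpow_mul_one_sub_cos_mul_exp_neg_mul hs0 hs1)
  rw [setIntegral_congr_fun measurableSet_Ioi
      fun t (ht : 0 < t) ↦ integral_rpow_mul_one_sub_cos_mul_exp_neg_mul ht,
    integral_rpow_mul_inv_one_add_sq hs0 hs1, setIntegral_congr_fun measurableSet_Ioi houter,
    integral_const_mul] at hswap
  rw [← div_div, hswap, mul_div_cancel_left₀ _ (Gamma_pos_of_pos (by linarith)).ne']

end

lemma pi_div_two_mul_sin_mul_Gamma_eq {s : ℝ} (hs0 : 0 < s) (hs1 : s < 1) (hs : s ≠ 1 / 2) :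
    π / (2 * sin (π * s) * Gamma (2 * s + 1))
      = cos (π * s) * Gamma (2 - 2 * s) / (2 * s * (1 - 2 * s)) := by
  have hsin : 0 < sin (π * s) := sin_pos_of_pos_of_lt_pi (by positivity) (by nlinarith [pi_pos])
  have hcos : cos (π * s) ≠ 0 := by
    rcases hs.lt_or_gt with h | h
    · exact (cos_pos_of_mem_Ioo ⟨by nlinarith [pi_pos], by nlinarith [pi_pos]⟩).ne'
    · exact (cos_neg_of_pi_div_two_lt_of_lt (by nlinarith [pi_pos]) (by nlinarith [pi_pos])).ne
  have h2s : 2 * s ≠ 0 := by positivity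
  have h12s : 1 - 2 * s ≠ 0 := fun h ↦ hs (by linarith)
  have hrefl : Gamma (2 * s) * Gamma (1 - 2 * s) * (2 * sin (π * s) * cos (π * s)) = π := by
    rw [Gamma_mul_Gamma_one_sub, show π * (2 * s) = 2 * (π * s) by ring, sin_two_mul]
    field_simp
  rw [show 2 - 2 * s = 1 - 2 * s + 1 by ring, Gamma_add_one h12s, Gamma_add_one h2s]
  field_simp
  linear_combination -hrefl

/-- For `s ∈ (0,1)`, `∫_0^∞ (1 - cos τ) τ^{-1-2s} dτ = cos(πs)Γ(2-2s)/(2s(1-2s))`,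
where for `s = 1/2` the right-hand side is interpreted by its continuous extension `π/2`. -/
theorem stmt5 (s : ℝ) (hs : s ∈ Set.Ioo (0 : ℝ) 1) :
    ∫ τ in Set.Ioi (0 : ℝ), (1 - Real.cos τ) * τ ^ (-1 - 2 * s)
      = if s = 1 / 2 then π / 2
        else Real.cos (π * s) * Real.Gamma (2 - 2 * s) / (2 * s * (1 - 2 * s)) := by
  obtain ⟨hs0, hs1⟩ := hs
  rw [integral_one_sub_cos_mul_rpow hs0 hs1]
  split_ifs with h
  · rw [h, mul_one_div, sin_pi_div_two]
    norm_num [Gamma_two]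
  · exact pi_div_two_mul_sin_mul_Gamma_eq hs0 hs1 h
end

section
/- Let σ_s be probability measures on S^{N-1} for s > 0. Then limsup as s → 0+ of max_{e ∈ S^{N-1}} ∫_{S^{N-1}} |e·θ|^{2s} dσ_s(θ) equals 1; in fact lim_{s→0+} max_{e} ∫ |e·θ|^{2s} dσ_s(θ) = 1. -/
open MeasureTheory Filter Metric Set Real Topology
open scoped RealInnerProductSpace

/-! For a unit vector `θ`, the slab `{x ∈ B : |⟪x, θ⟫| < t}` of the unit ball `B ⊆ ℝᴺ` has volume
at most `2ᴺ t`: reflect `θ` onto a coordinate vector and enclose the slab in a box. Hence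
`∫_B |⟪x, θ⟫|^p dx ≥ t^p (|B| - 2ᴺ t)` uniformly in `θ`. Integrating in `θ` against `σ` and
swapping the integrals, the `B`-average of `x ↦ ∫ |⟪x, θ⟫|^p dσ` is at least
`t^p (1 - 2ᴺ t / |B|)`; since `|⟪x, θ⟫| ≤ |⟪x / ‖x‖, θ⟫|`, that average is at most the supremum
over unit directions. With `p = 2s` and `t = s` the lower bound `s^{2s} (1 - 2ᴺ s / |B|)` tends
to `1`, while the supremum never exceeds `1`. -/

theorem tendsto_rpow_mul_self_nhdsGT_zero (c : ℝ) :
    Tendsto (fun s : ℝ => s ^ (c * s)) (𝓝[>] 0) (𝓝 1) := by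
  have hlog : Tendsto (fun s : ℝ => exp (c * (log s * s))) (𝓝[>] 0) (𝓝 1) := by
    simpa using ((tendsto_log_mul_rpow_nhdsGT_zero zero_lt_one).const_mul c).rexp
  refine hlog.congr' ?_
  filter_upwards [self_mem_nhdsWithin] with s hs
  rw [rpow_def_of_pos hs]
  ring_nf

section Slab

variable {E : Type*} [NormedAddCommGroup E] [InnerProductSpace ℝ E] [FiniteDimensional ℝ E]
  [MeasurableSpace E] [BorelSpace E]

theorem volume_slab_inter_ball_eq_of_norm_eq {u v : E} (huv : ‖u‖ = ‖v‖) (t : ℝ) :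
    volume ({x | |⟪x, u⟫| < t} ∩ ball (0 : E) 1) =
      volume ({x | |⟪x, v⟫| < t} ∩ ball (0 : E) 1) := by
  let T := Submodule.reflection (ℝ ∙ (u - v))ᗮ
  have hT : T u = v := Submodule.reflection_sub huv
  have hpre :
      {x | |⟪x, u⟫| < t} ∩ ball (0 : E) 1 = T ⁻¹' ({x | |⟪x, v⟫| < t} ∩ ball 0 1) := by
    ext x
    simp [← hT, T.inner_map_map]
  have hopen : IsOpen ({x : E | |⟪x, v⟫| < t} ∩ ball 0 1) :=
    (isOpen_lt (by fun_prop) continuous_const).inter isOpen_ball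
  rw [hpre, T.measurePreserving.measure_preimage hopen.measurableSet.nullMeasurableSet]

end Slab

section Moment

variable {E : Type*} [NormedAddCommGroup E] [InnerProductSpace ℝ E]

theorem abs_inner_le_norm_of_mem_sphere (x : E) {θ : E} (hθ : θ ∈ sphere (0 : E) 1) :
    |⟪x, θ⟫| ≤ ‖x‖ := by
  simpa [norm_eq_of_mem_sphere ⟨θ, hθ⟩] using abs_real_inner_le_norm x θ

variable [MeasurableSpace E]

noncomputable def directionalMoment (σ : Measure (sphere (0 : E) 1)) (p : ℝ) (x : E) : ℝ :=
  ∫ θ, |⟪x, (θ : E)⟫| ^ p ∂σ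

variable (σ : Measure (sphere (0 : E) 1)) {p : ℝ}

theorem integrable_abs_inner_rpow [BorelSpace E] [IsFiniteMeasure σ] (hp : 0 ≤ p) (x : E) :
    Integrable (fun θ : sphere (0 : E) 1 => |⟪x, (θ : E)⟫| ^ p) σ := by
  refine .of_bound (Measurable.aestronglyMeasurable (by fun_prop)) (‖x‖ ^ p)
    (ae_of_all _ fun θ => ?_)
  rw [norm_of_nonneg (by positivity)]
  exact rpow_le_rpow (abs_nonneg _) (abs_inner_le_norm_of_mem_sphere x θ.2) hp

theorem directionalMoment_mono [BorelSpace E] [IsFiniteMeasure σ] (hp : 0 ≤ p) {x y : E}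
    (hxy : ∀ θ : sphere (0 : E) 1, |⟪x, (θ : E)⟫| ≤ |⟪y, (θ : E)⟫|) :
    directionalMoment σ p x ≤ directionalMoment σ p y :=
  integral_mono (integrable_abs_inner_rpow σ hp x) (integrable_abs_inner_rpow σ hp y)
    fun θ => rpow_le_rpow (abs_nonneg _) (hxy θ) hp

theorem directionalMoment_le_one [IsProbabilityMeasure σ] (hp : 0 ≤ p) {x : E} (hx : ‖x‖ ≤ 1) :
    directionalMoment σ p x ≤ 1 := by
  refine (integral_mono_of_nonneg (ae_of_all _ fun _ => by positivity) (integrable_const 1)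
    (ae_of_all _ fun θ => rpow_le_one (abs_nonneg _)
      ((abs_inner_le_norm_of_mem_sphere x θ.2).trans hx) hp)).trans_eq (by simp)

theorem directionalMoment_le_iSup [BorelSpace E] [IsProbabilityMeasure σ] (hp : 0 ≤ p) {x : E}
    (hx : ‖x‖ ≤ 1) :
    directionalMoment σ p x ≤ ⨆ e : sphere (0 : E) 1, directionalMoment σ p e := by
  have hbdd : BddAbove (range fun e : sphere (0 : E) 1 => directionalMoment σ p e) :=
    ⟨1, forall_mem_range.2 fun e => directionalMoment_le_one σ hp (norm_eq_of_mem_sphere e).le⟩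
  obtain ⟨u, hxu⟩ : ∃ u : sphere (0 : E) 1, ∀ θ : sphere (0 : E) 1,
      |⟪x, (θ : E)⟫| ≤ |⟪(u : E), (θ : E)⟫| := by
    rcases eq_or_ne x 0 with rfl | hx0
    · obtain ⟨u⟩ := nonempty_of_isProbabilityMeasure σ
      exact ⟨u, fun θ => by simp⟩
    · refine ⟨⟨‖x‖⁻¹ • x, by simpa using norm_smul_inv_norm (𝕜 := ℝ) hx0⟩, fun θ => ?_⟩
      rw [real_inner_smul_left, abs_mul, abs_inv, abs_norm]
      exact le_mul_of_one_le_left (abs_nonneg _) ((one_le_inv₀ (norm_pos_iff.2 hx0)).2 hx)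
  exact (directionalMoment_mono σ hp hxu).trans (le_ciSup hbdd u)

theorem iSup_directionalMoment_le_one [IsProbabilityMeasure σ] (hp : 0 ≤ p) :
    ⨆ e : sphere (0 : E) 1, directionalMoment σ p e ≤ 1 :=
  have := nonempty_of_isProbabilityMeasure σ
  ciSup_le fun e => directionalMoment_le_one σ hp (norm_eq_of_mem_sphere e).le

end Moment

section Euclidean

variable {ι : Type*} [Fintype ι]

theorem volume_slab_single_inter_ball_le [DecidableEq ι] (i : ι) (t : ℝ) :
    volume ({x | |⟪x, EuclideanSpace.single i 1⟫| < t} ∩ ball (0 : EuclideanSpace ℝ ι) 1) ≤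
      ENNReal.ofReal (2 ^ Fintype.card ι * t) := by
  let box : Set (ι → ℝ) := univ.pi (Function.update (fun _ => Icc (-1) 1) i (Icc (-t) t))
  have hsub : {x | |⟪x, EuclideanSpace.single i 1⟫| < t} ∩ ball (0 : EuclideanSpace ℝ ι) 1 ⊆
      (MeasurableEquiv.toLp 2 (ι → ℝ)).symm ⁻¹' box := by
    rintro x ⟨hxi, hx⟩
    simp only [mem_ofPred_eq, EuclideanSpace.inner_single_right, conj_trivial, one_mul] at hxi
    intro j _
    rcases eq_or_ne j i with rfl | hj
    · simpa [abs_le] using hxi.le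
    · have hxj : ‖x j‖ < 1 := (PiLp.norm_apply_le x j).trans_lt (mem_ball_zero_iff.mp hx)
      simpa [box, hj, abs_le] using hxj.le
  calc _ ≤ volume ((MeasurableEquiv.toLp 2 (ι → ℝ)).symm ⁻¹' box) := measure_mono hsub
    _ = ∏ j, volume (Function.update (fun _ => Icc (-1 : ℝ) 1) i (Icc (-t) t) j) := by
      rw [(EuclideanSpace.volume_preserving_symm_measurableEquiv_toLp ι).measure_preimage
        (MeasurableSet.univ_pi fun j => ?_).nullMeasurableSet, volume_pi_pi]
      · rcases eq_or_ne j i with rfl | hj <;> simp [*, measurableSet_Icc]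
    _ = ENNReal.ofReal (2 * t) * 2 ^ (Fintype.card ι - 1) := by
      rw [Finset.prod_congr rfl fun j _ => Function.apply_update (fun _ => volume) _ i _ j,
        Finset.prod_update_of_mem (Finset.mem_univ i)]
      simp [Finset.card_sdiff, ← two_mul]
    _ = ENNReal.ofReal (2 ^ Fintype.card ι * t) := by
      obtain ⟨n, hn⟩ : ∃ n, Fintype.card ι = n + 1 :=
        Nat.exists_eq_add_one.mpr (Fintype.card_pos_iff.mpr ⟨i⟩)
      rw [hn, Nat.add_sub_cancel, pow_succ, mul_assoc,
        ENNReal.ofReal_mul (p := 2 ^ n) (by positivity), ENNReal.ofReal_pow zero_le_two,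
        ENNReal.ofReal_ofNat, mul_comm]

theorem measureReal_slab_inter_ball_le {θ : EuclideanSpace ℝ ι} (hθ : ‖θ‖ = 1) {t : ℝ}
    (ht : 0 ≤ t) :
    volume.real ({x | |⟪x, θ⟫| < t} ∩ ball (0 : EuclideanSpace ℝ ι) 1) ≤
      2 ^ Fintype.card ι * t := by
  classical
  obtain ⟨i⟩ : Nonempty ι := by
    by_contra! h
    simp [Subsingleton.elim θ 0] at hθ
  have hi : ‖EuclideanSpace.single i (1 : ℝ)‖ = 1 := by simp
  rw [measureReal_def, volume_slab_inter_ball_eq_of_norm_eq (hθ.trans hi.symm)]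
  exact ENNReal.toReal_le_of_le_ofReal (by positivity) (volume_slab_single_inter_ball_le i t)

theorem mul_sub_le_setIntegral_abs_inner_rpow {θ : EuclideanSpace ℝ ι} (hθ : ‖θ‖ = 1)
    {p t : ℝ} (hp : 0 ≤ p) (ht : 0 ≤ t) :
    t ^ p * (volume.real (ball (0 : EuclideanSpace ℝ ι) 1) - 2 ^ Fintype.card ι * t) ≤
      ∫ x in ball (0 : EuclideanSpace ℝ ι) 1, |⟪x, θ⟫| ^ p := by
  set B := ball (0 : EuclideanSpace ℝ ι) 1
  have : IsFiniteMeasure (volume.restrict B) :=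
    isFiniteMeasure_restrict.mpr measure_ball_lt_top.ne
  have hcont : Continuous fun x : EuclideanSpace ℝ ι => |⟪x, θ⟫| ^ p := by fun_prop
  have hint : IntegrableOn (fun x => |⟪x, θ⟫| ^ p) B :=
    (hcont.continuousOn.integrableOn_compact (isCompact_closedBall 0 1)).mono_set
      ball_subset_closedBall
  have hslab : MeasurableSet {x : EuclideanSpace ℝ ι | |⟪x, θ⟫| < t} :=
    measurableSet_lt (by fun_prop) measurable_const
  have hfar : volume.real B - 2 ^ Fintype.card ι * t ≤
      (volume.restrict B).real {x | t ^ p ≤ |⟪x, θ⟫| ^ p} := by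
    have hcompl : {x | t ^ p ≤ |⟪x, θ⟫| ^ p} ⊇ {x | |⟪x, θ⟫| < t}ᶜ := by
      intro x hx
      exact rpow_le_rpow ht (not_lt.mp hx) hp
    have hsplit := measureReal_add_measureReal_compl (μ := volume.restrict B) hslab
    rw [measureReal_restrict_apply hslab, measureReal_restrict_apply_univ] at hsplit
    have hnear := measureReal_slab_inter_ball_le hθ ht
    have hmono := measureReal_mono (μ := volume.restrict B) hcompl
    linarith
  calc _ ≤ t ^ p * (volume.restrict B).real {x | t ^ p ≤ |⟪x, θ⟫| ^ p} :=
        mul_le_mul_of_nonneg_left hfar (by positivity)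
    _ ≤ _ := mul_meas_ge_le_integral_of_nonneg (ae_of_all _ fun _ => by positivity) hint _

theorem integrable_abs_inner_rpow_restrict_ball_prod
    (σ : Measure (sphere (0 : EuclideanSpace ℝ ι) 1)) [IsFiniteMeasure σ] {p : ℝ} (hp : 0 ≤ p) :
    Integrable (fun z : EuclideanSpace ℝ ι × sphere (0 : EuclideanSpace ℝ ι) 1 =>
      |⟪z.1, (z.2 : EuclideanSpace ℝ ι)⟫| ^ p)
      ((volume.restrict (ball (0 : EuclideanSpace ℝ ι) 1)).prod σ) := by
  have : IsFiniteMeasure (volume.restrict (ball (0 : EuclideanSpace ℝ ι) 1)) :=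
    isFiniteMeasure_restrict.mpr measure_ball_lt_top.ne
  refine .of_bound (Measurable.aestronglyMeasurable (by fun_prop)) 1 ?_
  filter_upwards [Measure.quasiMeasurePreserving_fst.ae (ae_restrict_mem measurableSet_ball)]
    with z hz
  rw [norm_of_nonneg (by positivity)]
  exact rpow_le_one (abs_nonneg _)
    ((abs_inner_le_norm_of_mem_sphere z.1 z.2.2).trans (mem_ball_zero_iff.1 hz).le) hp

theorem rpow_mul_one_sub_le_iSup_directionalMoment
    (σ : Measure (sphere (0 : EuclideanSpace ℝ ι) 1)) [IsProbabilityMeasure σ] {p t : ℝ}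
    (hp : 0 ≤ p) (ht : 0 ≤ t) :
    t ^ p * (1 - 2 ^ Fintype.card ι * t / volume.real (ball (0 : EuclideanSpace ℝ ι) 1)) ≤
      ⨆ e : sphere (0 : EuclideanSpace ℝ ι) 1, directionalMoment σ p e := by
  set B := ball (0 : EuclideanSpace ℝ ι) 1
  set M := ⨆ e : sphere (0 : EuclideanSpace ℝ ι) 1, directionalMoment σ p e
  have hV : 0 < volume.real B :=
    ENNReal.toReal_pos (measure_ball_pos volume _ one_pos).ne' measure_ball_lt_top.ne
  have : IsFiniteMeasure (volume.restrict B) :=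
    isFiniteMeasure_restrict.mpr measure_ball_lt_top.ne
  have hG := integrable_abs_inner_rpow_restrict_ball_prod σ hp
  have haverage : t ^ p * (volume.real B - 2 ^ Fintype.card ι * t) ≤ M * volume.real B :=
    calc t ^ p * (volume.real B - 2 ^ Fintype.card ι * t)
        = ∫ _θ, t ^ p * (volume.real B - 2 ^ Fintype.card ι * t) ∂σ := by simp
      _ ≤ ∫ θ, (∫ x in B, |⟪x, (θ : EuclideanSpace ℝ ι)⟫| ^ p) ∂σ :=
        integral_mono (integrable_const _) hG.integral_prod_right fun θ =>
          mul_sub_le_setIntegral_abs_inner_rpow (norm_eq_of_mem_sphere θ) hp ht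
      _ = ∫ x in B, directionalMoment σ p x := (integral_integral_swap hG).symm
      _ ≤ ∫ _x in B, M :=
        integral_mono_of_nonneg (ae_of_all _ fun x => integral_nonneg fun _ => by positivity)
          (integrable_const M) ((ae_restrict_mem measurableSet_ball).mono fun x hx =>
            directionalMoment_le_iSup σ hp (mem_ball_zero_iff.1 hx).le)
      _ = M * volume.real B := by simp [mul_comm]
  calc _ = t ^ p * (volume.real B - 2 ^ Fintype.card ι * t) / volume.real B := by
        field_simp
    _ ≤ M := (div_le_iff₀ hV).2 haverage

end Euclidean

theorem stmt9_general (N : ℕ)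
    (σ : ℝ → Measure (Metric.sphere (0 : EuclideanSpace ℝ (Fin N)) 1))
    (hσ : ∀ s, 0 < s → IsProbabilityMeasure (σ s)) :
    Tendsto
      (fun s : ℝ => ⨆ e : Metric.sphere (0 : EuclideanSpace ℝ (Fin N)) 1,
        ∫ θ, |(inner ℝ (e : EuclideanSpace ℝ (Fin N)) (θ : EuclideanSpace ℝ (Fin N)) : ℝ)| ^ (2 * s)
          ∂(σ s))
      (nhdsWithin 0 (Set.Ioi 0)) (nhds 1) := by
  set V := volume.real (ball (0 : EuclideanSpace ℝ (Fin N)) 1)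
  have hlower : Tendsto (fun s : ℝ => s ^ (2 * s) * (1 - 2 ^ N * s / V)) (𝓝[>] 0) (𝓝 1) := by
    have hlin : Tendsto (fun s : ℝ => 1 - 2 ^ N * s / V) (𝓝 0) (𝓝 1) := by
      simpa using (((tendsto_id (x := 𝓝 (0 : ℝ))).const_mul (2 ^ N)).div_const V).const_sub 1
    simpa using (tendsto_rpow_mul_self_nhdsGT_zero 2).mul (hlin.mono_left nhdsWithin_le_nhds)
  refine tendsto_of_tendsto_of_tendsto_of_le_of_le' hlower tendsto_const_nhds ?_ ?_ <;>
    filter_upwards [self_mem_nhdsWithin] with s (hs : 0 < s) <;>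
    have := hσ s hs
  · have key :=
      rpow_mul_one_sub_le_iSup_directionalMoment (σ s) (p := 2 * s) (by positivity) hs.le
    rwa [Fintype.card_fin] at key
  · exact iSup_directionalMoment_le_one (σ s) (by positivity)

/-- If `σ_s` is a family of probability measures on `S^{N-1}` (for `s > 0`), then
`max_{e} ∫ |e·θ|^{2s} dσ_s(θ) → 1` as `s → 0⁺`. -/
theorem stmt9 (N : ℕ) (hN : 1 ≤ N)
    (σ : ℝ → Measure (Metric.sphere (0 : EuclideanSpace ℝ (Fin N)) 1))
    (hσ : ∀ s, 0 < s → IsProbabilityMeasure (σ s)) :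
    Tendsto
      (fun s : ℝ => ⨆ e : Metric.sphere (0 : EuclideanSpace ℝ (Fin N)) 1,
        ∫ θ, |(inner ℝ (e : EuclideanSpace ℝ (Fin N)) (θ : EuclideanSpace ℝ (Fin N)) : ℝ)| ^ (2 * s)
          ∂(σ s))
      (nhdsWithin 0 (Set.Ioi 0)) (nhds 1) :=
  stmt9_general N σ hσ
end

section
/- Let φ ∈ C_c^∞(ℝ) be nonzero with support in (-R, R). If Σ_{k=1}^∞ ‖D^k φ‖_{L²(ℝ)}² / k² < ∞, then φ ≡ 0. Equivalently: for every nonzero compactly supported smooth φ on ℝ, the series Σ_{k≥1} ‖D^k φ‖_{L²}²/k² diverges. -/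
open MeasureTheory ENNReal

lemma aux_tsupport {f : ℝ → ℝ} (n : ℕ) :
    tsupport (iteratedDeriv n f) ⊆ tsupport f := by
  induction n with
  | zero => rw [iteratedDeriv_zero]
  | succ n ih =>
    rw [iteratedDeriv_succ]
    exact (closure_minimal support_deriv_subset (isClosed_tsupport _)).trans ih

lemma aux_idw {f : ℝ → ℝ} (hf : ContDiff ℝ (⊤ : ℕ∞) f) {s : Set ℝ} (hs : UniqueDiffOn ℝ s)
    {x : ℝ} (hx : x ∈ s) (n : ℕ) :
    iteratedDerivWithin n f s x = iteratedDeriv n f x := by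
  rw [iteratedDerivWithin_eq_iteratedFDerivWithin, iteratedDeriv_eq_iteratedFDeriv]
  congr 1
  have h : HasFTaylorSeriesUpTo (n : ℕ∞) f (ftaylorSeries ℝ f) :=
    contDiff_iff_ftaylorSeries.mp (hf.of_le (by exact_mod_cast le_top))
  rw [← ((hasFTaylorSeriesUpToOn_univ_iff.mpr h).mono
      (Set.subset_univ s)).eq_iteratedFDerivWithin_of_uniqueDiffOn le_rfl hs hx,
    h.eq_iteratedFDeriv le_rfl x]

lemma aux_sup {f : ℝ → ℝ} (hdf : Differentiable ℝ f) (hf' : Continuous (deriv f))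
    {M : ℝ} (hM : 0 < M) (hs : tsupport f ⊆ Set.Icc (-M) M) (x : ℝ) :
    |f x| ≤ (2 * M) ^ (2⁻¹ : ℝ) * (eLpNorm (deriv f) 2 volume).toReal := by
  have hcf : HasCompactSupport f :=
    isCompact_Icc.of_isClosed_subset (isClosed_tsupport f) hs
  have hcg : HasCompactSupport (deriv f) := hcf.deriv
  have hsg : tsupport (deriv f) ⊆ Set.Icc (-M) M :=
    (closure_minimal support_deriv_subset (isClosed_tsupport f)).trans hs
  have hRHS : 0 ≤ (2 * M) ^ (2⁻¹ : ℝ) * (eLpNorm (deriv f) 2 volume).toReal := by positivity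
  rcases le_or_gt x (-M - 1) with hx | hx
  · have hx0 : f x = 0 := by
      apply image_eq_zero_of_notMem_tsupport
      intro hmem; have := hs hmem; rw [Set.mem_Icc] at this; linarith
    simpa [hx0] using hRHS
  · have hfa : f (-M - 1) = 0 := by
      apply image_eq_zero_of_notMem_tsupport
      intro hmem; have := hs hmem; rw [Set.mem_Icc] at this; linarith
    have hint : Integrable (deriv f) volume := hf'.integrable_of_hasCompactSupport hcg
    have hftc : ∫ t in (-M - 1)..x, deriv f t = f x - f (-M - 1) :=
      intervalIntegral.integral_deriv_eq_sub (fun t _ => hdf t) (hf'.intervalIntegrable _ _)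
    have h1 : |f x| ≤ ∫ t in Set.Ioc (-M - 1) x, |deriv f t| := by
      have : f x = ∫ t in (-M - 1)..x, deriv f t := by rw [hftc, hfa, sub_zero]
      rw [this, ← intervalIntegral.integral_of_le hx.le]
      exact intervalIntegral.abs_integral_le_integral_abs hx.le
    have h2 : ∫ t in Set.Ioc (-M - 1) x, |deriv f t| ≤ ∫ t, |deriv f t| :=
      setIntegral_le_integral hint.abs (Filter.Eventually.of_forall fun t => abs_nonneg _)
    have h3 : ∫ t, |deriv f t| = ∫ t in Set.Icc (-M) M, |deriv f t| :=
      (setIntegral_eq_integral_of_forall_compl_eq_zero fun t ht => by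
        rw [image_eq_zero_of_notMem_tsupport (fun hmem => ht (hsg hmem)), abs_zero]).symm
    set μ := volume.restrict (Set.Icc (-M : ℝ) M) with hμ
    haveI : IsFiniteMeasure μ :=
      ⟨by rw [hμ, Measure.restrict_apply_univ]; exact measure_Icc_lt_top⟩
    have h2eq : ENNReal.ofReal (2 : ℝ) = (2 : ℝ≥0∞) := by norm_num
    have hg2v : MemLp (deriv f) 2 volume := hf'.memLp_of_hasCompactSupport hcg
    have hg2 : MemLp (deriv f) (ENNReal.ofReal (2 : ℝ)) μ := by
      rw [h2eq]; exact hg2v.restrict _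
    have h1c : MemLp (fun _ : ℝ => (1 : ℝ)) (ENNReal.ofReal (2 : ℝ)) μ := memLp_const 1
    have hpq : (2 : ℝ).HolderConjugate 2 := Real.HolderConjugate.two_two
    have hCS := integral_mul_norm_le_Lp_mul_Lq hpq hg2 h1c
    have hCS1 : ∫ a, ‖deriv f a‖ * ‖(1 : ℝ)‖ ∂μ = ∫ t in Set.Icc (-M : ℝ) M, |deriv f t| := by
      simp [Real.norm_eq_abs, hμ]
    have hCS2 : ∫ a, ‖(1 : ℝ)‖ ^ (2 : ℝ) ∂μ = 2 * M := by
      simp only [norm_one, Real.one_rpow, integral_const, smul_eq_mul, mul_one]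
      rw [hμ, measureReal_def, Measure.restrict_apply_univ, Real.volume_Icc,
        ENNReal.toReal_ofReal (by linarith)]
      ring
    have hint2 : Integrable (fun t => ‖deriv f t‖ ^ (2 : ℝ)) volume := by
      apply Continuous.integrable_of_hasCompactSupport
      · exact hf'.norm.rpow_const fun t => Or.inr (by norm_num)
      · exact hcg.comp_left (g := fun y : ℝ => ‖y‖ ^ (2 : ℝ))
          (by simp [Real.zero_rpow (two_ne_zero)])
    have he : (eLpNorm (deriv f) 2 volume).toReal
        = (∫ t, ‖deriv f t‖ ^ (2 : ℝ)) ^ (2⁻¹ : ℝ) := by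
      rw [hg2v.eLpNorm_eq_integral_rpow_norm (by norm_num) (by norm_num)]
      simp only [ENNReal.toReal_ofNat]
      rw [ENNReal.toReal_ofReal (by positivity)]
    have hmono : (∫ a, ‖deriv f a‖ ^ (2 : ℝ) ∂μ) ^ (1 / (2 : ℝ))
        ≤ (eLpNorm (deriv f) 2 volume).toReal := by
      rw [he, one_div]
      apply Real.rpow_le_rpow (integral_nonneg fun t => by positivity)
      · exact setIntegral_le_integral hint2 (Filter.Eventually.of_forall fun t => by positivity)
      · norm_num
    calc |f x| ≤ ∫ t in Set.Ioc (-M - 1) x, |deriv f t| := h1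
      _ ≤ ∫ t, |deriv f t| := h2
      _ = ∫ t in Set.Icc (-M) M, |deriv f t| := h3
      _ = ∫ a, ‖deriv f a‖ * ‖(1 : ℝ)‖ ∂μ := hCS1.symm
      _ ≤ (∫ a, ‖deriv f a‖ ^ (2 : ℝ) ∂μ) ^ (1 / (2 : ℝ))
          * (∫ a, ‖(1 : ℝ)‖ ^ (2 : ℝ) ∂μ) ^ (1 / (2 : ℝ)) := hCS
      _ ≤ (eLpNorm (deriv f) 2 volume).toReal * (2 * M) ^ (1 / (2 : ℝ)) := by
          rw [hCS2]
          exact mul_le_mul_of_nonneg_right hmono (by positivity)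
      _ = (2 * M) ^ (2⁻¹ : ℝ) * (eLpNorm (deriv f) 2 volume).toReal := by
          rw [one_div, mul_comm]

/-- If `φ` is smooth with compact support on `ℝ` and
`∑_{k≥1} ‖D^k φ‖_{L²}² / k² < ∞`, then `φ ≡ 0`. -/
theorem stmt12 (φ : ℝ → ℝ) (hφ : ContDiff ℝ (⊤ : ℕ∞) φ) (hc : HasCompactSupport φ)
    (hsum : ∑' k : ℕ, (eLpNorm (iteratedDeriv (k + 1) φ) 2 volume) ^ 2 / ((k : ℝ≥0∞) + 1) ^ 2
      ≠ ⊤) :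
    φ = 0 := by
  -- choose M with tsupport φ ⊆ Icc (-M) M
  obtain ⟨r, hr⟩ := hc.isBounded.subset_closedBall 0
  set M : ℝ := |r| + 1 with hMdef
  have hM : 0 < M := by positivity
  have hMsupp : tsupport φ ⊆ Set.Icc (-M) M := by
    refine hr.trans ?_
    rw [Real.closedBall_eq_Icc]
    apply Set.Icc_subset_Icc
    · simp only [zero_sub, hMdef]
      cases abs_cases r with
      | inl h => nlinarith [h.1, h.2]
      | inr h => nlinarith [h.1, h.2]
    · simp only [zero_add, hMdef]
      cases abs_cases r with
      | inl h => nlinarith [h.1, h.2]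
      | inr h => nlinarith [h.1, h.2]
  have hsupp_n : ∀ n : ℕ, tsupport (iteratedDeriv n φ) ⊆ Set.Icc (-M) M :=
    fun n => (aux_tsupport n).trans hMsupp
  set C : ℝ := (2 * M) ^ (2⁻¹ : ℝ) with hCdef
  have hC : 0 ≤ C := by positivity
  set b : ℕ → ℝ := fun k => (eLpNorm (iteratedDeriv (k + 1) φ) 2 volume).toReal with hbdef
  -- sup bound
  have hsup : ∀ (n : ℕ) (x : ℝ), |iteratedDeriv n φ x| ≤ C * b n := by
    intro n x
    have hd : Differentiable ℝ (iteratedDeriv n φ) :=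
      hφ.differentiable_iteratedDeriv n (by exact_mod_cast lt_top_iff_ne_top.mpr (by simp))
    have hder : deriv (iteratedDeriv n φ) = iteratedDeriv (n + 1) φ :=
      (iteratedDeriv_succ).symm
    have hcont : Continuous (deriv (iteratedDeriv n φ)) := by
      rw [hder]; exact hφ.continuous_iteratedDeriv (n + 1) (by exact_mod_cast le_top)
    have := aux_sup hd hcont hM (hsupp_n n) x
    rwa [hder] at this
  -- eventual bound on b
  have htend := ENNReal.tendsto_atTop_zero_of_tsum_ne_top hsum
  obtain ⟨N, hN⟩ := (Filter.eventually_atTop).mp (htend.eventually_lt_const zero_lt_one)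
  have hb : ∀ k ≥ N, b k ≤ (k : ℝ) + 1 := by
    intro k hk
    have h1 := hN k hk
    have hd0 : ((k : ℝ≥0∞) + 1) ^ 2 ≠ 0 := pow_ne_zero _ (by simp)
    have hdt : ((k : ℝ≥0∞) + 1) ^ 2 ≠ ⊤ := by
      apply ENNReal.pow_ne_top
      exact ENNReal.add_ne_top.mpr ⟨ENNReal.natCast_ne_top k, ENNReal.one_ne_top⟩
    rw [ENNReal.div_lt_iff (Or.inl hd0) (Or.inl hdt), one_mul] at h1
    have h2 : eLpNorm (iteratedDeriv (k + 1) φ) 2 volume ≤ (k : ℝ≥0∞) + 1 := by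
      by_contra hcon
      push_neg at hcon
      exact absurd (ENNReal.pow_lt_pow_left two_ne_zero hcon) (not_lt.mpr h1.le)
    have h3 := ENNReal.toReal_mono (ENNReal.add_ne_top.mpr
      ⟨ENNReal.natCast_ne_top k, ENNReal.one_ne_top⟩) h2
    rw [ENNReal.toReal_add (ENNReal.natCast_ne_top k) ENNReal.one_ne_top] at h3
    simpa [hbdef] using h3
  -- Taylor argument
  funext y
  show φ y = (0 : ℝ → ℝ) y
  simp only [Pi.zero_apply]
  rcases lt_or_ge (-M - 1) y with hy | hy
  swap
  · apply image_eq_zero_of_notMem_tsupport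
    intro hmem; have := hMsupp hmem; rw [Set.mem_Icc] at this; linarith
  · set x₀ : ℝ := -M - 2 with hx₀def
    have hx₀y : x₀ < y := by rw [hx₀def]; linarith
    have hUD : UniqueDiffOn ℝ (Set.Icc x₀ y) := uniqueDiffOn_Icc hx₀y
    have hx₀mem : x₀ ∈ Set.Icc x₀ y := Set.left_mem_Icc.mpr hx₀y.le
    have hder0 : ∀ m : ℕ, iteratedDeriv m φ x₀ = 0 := by
      intro m
      apply image_eq_zero_of_notMem_tsupport
      intro hmem; have := hsupp_n m hmem; rw [Set.mem_Icc] at this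
      rw [hx₀def] at this; linarith [this.1]
    set r : ℝ := y - x₀ with hrdef
    have hr : 0 < r := by rw [hrdef]; linarith
    -- bound |φ y| for every n ≥ N
    have hbound : ∀ n ≥ N, |φ y| ≤ C * ((n : ℝ) + 2) * r ^ (n + 1) / ((n + 1).factorial : ℝ) := by
      intro n hn
      have hcd : ContDiffOn ℝ n φ (Set.Icc x₀ y) := (hφ.of_le (by exact_mod_cast le_top)).contDiffOn
      have hdiff : DifferentiableOn ℝ (iteratedDerivWithin n φ (Set.Icc x₀ y))
          (Set.Ioo x₀ y) := by
        apply DifferentiableOn.congr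
          ((hφ.differentiable_iteratedDeriv n
            (by exact_mod_cast lt_top_iff_ne_top.mpr (by simp))).differentiableOn)
        intro t ht
        exact aux_idw hφ hUD (Set.Ioo_subset_Icc_self ht) n
      obtain ⟨x', hx', hres⟩ := taylor_mean_remainder_lagrange hx₀y.ne
        (by rwa [Set.uIcc_of_le hx₀y.le]) (by rwa [Set.uIcc_of_le hx₀y.le, Set.uIoo_of_le hx₀y.le])
      rw [Set.uIcc_of_le hx₀y.le] at hres
      rw [Set.uIoo_of_le hx₀y.le] at hx'
      have htay : taylorWithinEval φ n (Set.Icc x₀ y) x₀ y = 0 := by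
        rw [taylor_within_apply]
        apply Finset.sum_eq_zero
        intro k _
        rw [aux_idw hφ hUD hx₀mem k, hder0 k, smul_zero]
      rw [htay, sub_zero] at hres
      rw [hres]
      have hx'mem : x' ∈ Set.Icc x₀ y := Set.Ioo_subset_Icc_self hx'
      rw [aux_idw hφ hUD hx'mem (n + 1)]
      have h5 : |iteratedDeriv (n + 1) φ x'| ≤ C * ((n : ℝ) + 2) := by
        refine (hsup (n + 1) x').trans ?_
        apply mul_le_mul_of_nonneg_left ?_ hC
        have := hb (n + 1) (le_trans hn (Nat.le_succ n))
        push_cast at this ⊢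
        linarith
      rw [abs_div, abs_mul, abs_of_pos (pow_pos hr (n + 1)),
        abs_of_pos (show (0:ℝ) < ((n + 1).factorial : ℝ) from by exact_mod_cast (n+1).factorial_pos)]
      gcongr
    -- pass to the limit
    have hT : Filter.Tendsto (fun n : ℕ => C * ((n : ℝ) + 2) * r ^ (n + 1) / ((n + 1).factorial : ℝ))
        Filter.atTop (nhds 0) := by
      apply squeeze_zero (g := fun n : ℕ => (2 * C * r) * (r ^ n / (Nat.factorial n : ℝ)))
        (fun n => by positivity) ?_ ?_
      · intro n
        have hfacpos : (0:ℝ) < (Nat.factorial n : ℝ) := by exact_mod_cast n.factorial_pos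
        have hfac : ((n + 1).factorial : ℝ) = ((n : ℝ) + 1) * (Nat.factorial n : ℝ) := by
          rw [Nat.factorial_succ]; push_cast; ring
        rw [hfac, pow_succ, div_le_iff₀ (by positivity)]
        have hre : 2 * C * r * ((r ^ n) / (Nat.factorial n : ℝ)) * (((n : ℝ) + 1) * (Nat.factorial n : ℝ))
            = 2 * C * r * r ^ n * ((n : ℝ) + 1) := by
          field_simp
        rw [hre]
        nlinarith [mul_nonneg (mul_nonneg hC hr.le) (pow_nonneg hr.le n),
          (Nat.cast_nonneg n : (0:ℝ) ≤ (n : ℝ))]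
      · have := (FloorSemiring.tendsto_pow_div_factorial_atTop (K := ℝ) r).const_mul (2 * C * r)
        simpa using this
    have hfin : |φ y| ≤ 0 := ge_of_tendsto hT (Filter.eventually_atTop.mpr ⟨N, hbound⟩)
    exact abs_nonpos_iff.mp hfin
end

section
/- Let Ω ⊂ ℝ^N be bounded with diameter D, let R := 2D, and let s > 0 with s₁ := min{n ∈ ℤ : n > s}. For u ∈ C_c^∞(Ω) and the measure ν_s(dy) given in polar coordinates by r^{-1-2s} dr ⊗ σ_s(dθ) with σ_s a probability measure on S^{N-1}, one has ∬_{ℝ^N × ℝ^N} (δ_{s₁} u(x,y))² dν_s(y) dx ≥ C(2s₁, s₁)² · (1/(2s R^{2s})) · ‖u‖_{L²(Ω)}², where δ_m u(x,y) := Σ_{k=-m}^{m} (-1)^k C(2m, m-k) u(x+ky). -/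
open MeasureTheory ENNReal

lemma rpow_tail_integral (R s : ℝ) (hR : 0 < R) (hs : 0 < s) :
    ∫⁻ r in Set.Ioi R, ENNReal.ofReal (r ^ (-1 - 2*s)) = ENNReal.ofReal (1/(2*s*R^(2*s))) := by
  rw [← ofReal_integral_eq_lintegral_ofReal (integrableOn_Ioi_rpow_of_lt (by linarith) hR)
      ((ae_restrict_iff' measurableSet_Ioi).2 (ae_of_all _ fun r hr =>
        Real.rpow_nonneg (le_of_lt (lt_trans hR hr)) _))]
  rw [integral_Ioi_rpow_of_lt (by linarith) hR]
  congr 1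
  rw [show -1 - 2*s + 1 = -(2*s) by ring, Real.rpow_neg hR.le]
  field_simp

/-- Poincaré-type lower bound: let `Ω ⊂ ℝ^N` be bounded with diameter `D`, `R = 2D`,
`s > 0`, `s₁ = min{n ∈ ℤ : n > s} = ⌊s⌋ + 1`, let `σ_s` be a probability measure on the
unit sphere, and let `u ∈ C_c^∞(Ω)`. Writing the measure `ν_s` in polar coordinates
`r^{-1-2s} dr ⊗ σ_s(dθ)`, one has
`∬ (δ_{s₁} u(x,y))² dν_s(y) dx ≥ C(2s₁,s₁)² · (1/(2sR^{2s})) · ‖u‖²_{L²(Ω)}`, where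
`δ_m u(x,y) = ∑_{k=-m}^{m} (-1)^k C(2m, m-k) u(x+ky)`. -/
theorem stmt16 (N : ℕ) (Ω : Set (EuclideanSpace ℝ (Fin N))) (hΩ : Bornology.IsBounded Ω)
    (D R s : ℝ) (hD : D = Metric.diam Ω) (hR : R = 2 * D) (hs : 0 < s)
    (s₁ : ℕ) (hs₁ : (s₁ : ℤ) = ⌊s⌋ + 1)
    (σ : Measure (Metric.sphere (0 : EuclideanSpace ℝ (Fin N)) 1)) [IsProbabilityMeasure σ]
    (u : EuclideanSpace ℝ (Fin N) → ℝ) (hu : ContDiff ℝ (⊤ : ℕ∞) u) (hc : HasCompactSupport u)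
    (hsupp : tsupport u ⊆ Ω) :
    ((2 * s₁).choose s₁ : ℝ≥0∞) ^ 2 * ENNReal.ofReal (1 / (2 * s * R ^ (2 * s))) *
        ∫⁻ x, ENNReal.ofReal (u x ^ 2)
      ≤ ∫⁻ x, ∫⁻ θ, (∫⁻ r in Set.Ioi (0 : ℝ),
          ENNReal.ofReal
            ((∑ k ∈ Finset.Icc (-(s₁ : ℤ)) (s₁ : ℤ),
                (-1 : ℝ) ^ k * ((2 * s₁).choose ((s₁ : ℤ) - k).toNat : ℝ) *
                  u (x + k • (r • (θ : EuclideanSpace ℝ (Fin N))))) ^ 2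
              * r ^ (-1 - 2 * s))) ∂σ := by
  have hDnn : 0 ≤ D := hD ▸ Metric.diam_nonneg
  rcases eq_or_lt_of_le hDnn with hD0 | hDpos
  · -- D = 0, so R = 0 and the constant is 0
    have hR0 : R = 0 := by rw [hR, ← hD0]; ring
    have : (1 : ℝ) / (2 * s * R ^ (2 * s)) = 0 := by
      rw [hR0, Real.zero_rpow (by positivity)]
      simp
    rw [this]
    simp
  have hRpos : 0 < R := by rw [hR]; linarith
  -- main case
  calc ((2 * s₁).choose s₁ : ℝ≥0∞) ^ 2 * ENNReal.ofReal (1 / (2 * s * R ^ (2 * s))) *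
        ∫⁻ x, ENNReal.ofReal (u x ^ 2)
      = ∫⁻ x, ((2 * s₁).choose s₁ : ℝ≥0∞) ^ 2 * ENNReal.ofReal (1 / (2 * s * R ^ (2 * s))) *
          ENNReal.ofReal (u x ^ 2) := (lintegral_const_mul _ (by
            exact ((measurable_ofReal.comp ((hu.continuous.measurable).pow_const 2)))) ).symm
    _ ≤ _ := ?_
  apply lintegral_mono
  intro x
  rcases eq_or_ne (u x) 0 with hux | hux
  · simp [hux]
  -- x ∈ Ω
  have hxΩ : x ∈ Ω := hsupp (subset_tsupport u (by simpa using hux))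
  -- evaluate the sum for r > R
  have hsum : ∀ (θ : Metric.sphere (0 : EuclideanSpace ℝ (Fin N)) 1), ∀ r ∈ Set.Ioi R,
      (∑ k ∈ Finset.Icc (-(s₁ : ℤ)) (s₁ : ℤ),
        (-1 : ℝ) ^ k * ((2 * s₁).choose ((s₁ : ℤ) - k).toNat : ℝ) *
          u (x + k • (r • (θ : EuclideanSpace ℝ (Fin N)))))
      = ((2 * s₁).choose s₁ : ℝ) * u x := by
    intro θ r hr
    simp only [Set.mem_Ioi] at hr
    have hrR : R < r := hr
    rw [Finset.sum_eq_single_of_mem (0 : ℤ) (by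
        simp [Finset.mem_Icc])]
    · simp
    · intro k _ hk0
      have huk : u (x + k • (r • (θ : EuclideanSpace ℝ (Fin N)))) = 0 := by
        by_contra h
        have hmem : x + k • (r • (θ : EuclideanSpace ℝ (Fin N))) ∈ Ω :=
          hsupp (subset_tsupport u (by simpa using h))
        have hdist : dist (x + k • (r • (θ : EuclideanSpace ℝ (Fin N)))) x ≤ D := by
          rw [hD]; exact Metric.dist_le_diam_of_mem hΩ hmem hxΩ
        have hnorm : ‖(θ : EuclideanSpace ℝ (Fin N))‖ = 1 := by
          have := θ.2
          simp [mem_sphere_iff_norm] at this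
          simpa using this
        have : dist (x + k • (r • (θ : EuclideanSpace ℝ (Fin N)))) x
            = |(k : ℝ)| * |r| := by
          rw [dist_eq_norm]
          simp only [add_sub_cancel_left, ← Int.cast_smul_eq_zsmul ℝ, norm_smul, Real.norm_eq_abs,
            hnorm, mul_one]
        have hk1 : (1 : ℝ) ≤ |(k : ℝ)| := by
          rw [← Int.cast_abs]
          exact_mod_cast Int.one_le_abs hk0
        have hrabs : |r| = r := abs_of_pos (lt_trans hRpos hrR)
        have hbig : D < dist (x + k • (r • (θ : EuclideanSpace ℝ (Fin N)))) x := by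
          rw [this, hrabs]
          nlinarith
        linarith
      simp [huk]
  -- reduce to the tail integral
  have key : ∀ θ : Metric.sphere (0 : EuclideanSpace ℝ (Fin N)) 1,
      ((2 * s₁).choose s₁ : ℝ≥0∞) ^ 2 * ENNReal.ofReal (1 / (2 * s * R ^ (2 * s))) *
          ENNReal.ofReal (u x ^ 2)
      ≤ ∫⁻ r in Set.Ioi (0 : ℝ),
          ENNReal.ofReal
            ((∑ k ∈ Finset.Icc (-(s₁ : ℤ)) (s₁ : ℤ),
                (-1 : ℝ) ^ k * ((2 * s₁).choose ((s₁ : ℤ) - k).toNat : ℝ) *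
                  u (x + k • (r • (θ : EuclideanSpace ℝ (Fin N))))) ^ 2
              * r ^ (-1 - 2 * s)) := by
    intro θ
    have hsub : Set.Ioi R ⊆ Set.Ioi (0 : ℝ) := fun r hr => lt_trans hRpos hr
    refine le_trans ?_ (lintegral_mono_set hsub)
    have : ∀ r ∈ Set.Ioi R,
        ENNReal.ofReal
            ((∑ k ∈ Finset.Icc (-(s₁ : ℤ)) (s₁ : ℤ),
                (-1 : ℝ) ^ k * ((2 * s₁).choose ((s₁ : ℤ) - k).toNat : ℝ) *
                  u (x + k • (r • (θ : EuclideanSpace ℝ (Fin N))))) ^ 2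
              * r ^ (-1 - 2 * s))
        = ((2 * s₁).choose s₁ : ℝ≥0∞) ^ 2 * ENNReal.ofReal (u x ^ 2) *
            ENNReal.ofReal (r ^ (-1 - 2 * s)) := by
      intro r hr
      rw [hsum θ r hr, mul_pow, ENNReal.ofReal_mul (by positivity),
        ENNReal.ofReal_mul (by positivity)]
      rw [ENNReal.ofReal_pow (by positivity), ENNReal.ofReal_natCast]
    rw [setLIntegral_congr_fun measurableSet_Ioi this, lintegral_const_mul'
      _ _ (ENNReal.mul_ne_top (ENNReal.pow_ne_top (ENNReal.natCast_ne_top _)) ENNReal.ofReal_ne_top), rpow_tail_integral R s hRpos hs]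
    ring_nf
    exact le_refl _
  calc ((2 * s₁).choose s₁ : ℝ≥0∞) ^ 2 * ENNReal.ofReal (1 / (2 * s * R ^ (2 * s))) *
        ENNReal.ofReal (u x ^ 2)
      = ∫⁻ _θ, ((2 * s₁).choose s₁ : ℝ≥0∞) ^ 2 * ENNReal.ofReal (1 / (2 * s * R ^ (2 * s))) *
          ENNReal.ofReal (u x ^ 2) ∂σ := by simp
    _ ≤ _ := lintegral_mono key
end
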